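/- Conditional moments of the softmax weights: fix q ≥ 1 and n ≥ 2. For every value of x1, the conditional expectations over x2,…,xn satisfy E_{−1}[p_{12}^q] ≤ (n−1)^{−q}·exp((q²/2)·x1ᵀ B Σ Bᵀ x1) and E_{−1}[p_{11}^q] ≤ (n−1)^{−q}·exp(q·x1ᵀ B x1)·exp((q²/(2(n−1)))·x1ᵀ B Σ Bᵀ x1). -/

import Mathlib

open MeasureTheory Matrix Real
open scoped BigOperators

noncomputable section

def vnorm {ι : Type*} [Fintype ι] (v : ι → ℝ) : ℝ := Real.sqrt (∑ i, (v i) ^ 2)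

def frob {ι κ : Type*} [Fintype ι] [Fintype κ] (A : Matrix ι κ ℝ) : ℝ :=
  Real.sqrt (∑ i, ∑ j, (A i j) ^ 2)

def opN {ι κ : Type*} [Fintype ι] [Fintype κ] (A : Matrix ι κ ℝ) : ℝ :=
  sSup {r | ∃ x : κ → ℝ, vnorm x ≤ 1 ∧ r = vnorm (A.mulVec x)}

def svalMax {ι κ : Type*} [Fintype ι] [Fintype κ] (A : Matrix ι κ ℝ) : ℝ :=
  sSup {r | ∃ x : κ → ℝ, vnorm x = 1 ∧ r = vnorm (A.mulVec x)}

def svalMin {ι κ : Type*} [Fintype ι] [Fintype κ] (A : Matrix ι κ ℝ) : ℝ :=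
  sInf {r | ∃ x : κ → ℝ, vnorm x = 1 ∧ r = vnorm (A.mulVec x)}

def msqrt {ι : Type*} [Fintype ι] [DecidableEq ι] (S : Matrix ι ι ℝ) : Matrix ι ι ℝ :=
  @dite _ S.PosSemidef (Classical.dec _) (fun h => (h.1.eigenvectorUnitary : Matrix ι ι ℝ) *
    diagonal (fun i => Real.sqrt (h.1.eigenvalues i)) * (star h.1.eigenvectorUnitary : Matrix ι ι ℝ)) (fun _ => 0)

def gaussian {k : ℕ} (S : Matrix (Fin k) (Fin k) ℝ) : Measure (Fin k → ℝ) :=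
  Measure.map ((msqrt S).mulVec) (Measure.pi fun _ => ProbabilityTheory.gaussianReal 0 1)

/-- Population loss. -/
def popLoss {d p : ℕ} (Sig : Matrix (Fin d) (Fin d) ℝ) (Om : Matrix (Fin p) (Fin p) ℝ)
    (M A : Matrix (Fin p) (Fin d) ℝ) (B : Matrix (Fin d) (Fin d) ℝ) : ℝ :=
  (1/2) * ∫ w : (Fin d → ℝ) × (Fin p → ℝ),
      vnorm (A.mulVec
        ((∫ x2, Real.exp (w.1 ⬝ᵥ B.mulVec x2) ∂gaussian Sig)⁻¹ •
          ∫ x2, Real.exp (w.1 ⬝ᵥ B.mulVec x2) • x2 ∂gaussian Sig)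
        - (M.mulVec w.1 + w.2)) ^ 2
    ∂((gaussian Sig).prod (gaussian Om))

/-- Population regularizer. -/
def reg {d p : ℕ} (Sig : Matrix (Fin d) (Fin d) ℝ) (A : Matrix (Fin p) (Fin d) ℝ)
    (B : Matrix (Fin d) (Fin d) ℝ) : ℝ :=
  (1/8) * frob (msqrt Sig * (Aᵀ * A - Bᵀ * Sig * B) * msqrt Sig) ^ 2

/-- Vertical concatenation of `A` and `B`. -/
def vcat {d p : ℕ} (A : Matrix (Fin p) (Fin d) ℝ) (B : Matrix (Fin d) (Fin d) ℝ) :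
    Matrix (Fin p ⊕ Fin d) (Fin d) ℝ := Matrix.of (Sum.elim A B)

def topM {d p : ℕ} (θ : Matrix (Fin p ⊕ Fin d) (Fin d) ℝ) : Matrix (Fin p) (Fin d) ℝ :=
  Matrix.of fun i j => θ (Sum.inl i) j

def botM {d p : ℕ} (θ : Matrix (Fin p ⊕ Fin d) (Fin d) ℝ) : Matrix (Fin d) (Fin d) ℝ :=
  Matrix.of fun i j => θ (Sum.inr i) j

/-- Extended covariance matrix `P = diag(I_p, Σ)`. -/
def Pmat (p : ℕ) {d : ℕ} (Sig : Matrix (Fin d) (Fin d) ℝ) :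
    Matrix (Fin p ⊕ Fin d) (Fin p ⊕ Fin d) ℝ :=
  Matrix.fromBlocks 1 0 0 Sig

def Pinner {d p : ℕ} (Sig : Matrix (Fin d) (Fin d) ℝ)
    (θ1 θ2 : Matrix (Fin p ⊕ Fin d) (Fin d) ℝ) : ℝ :=
  (θ1ᵀ * Pmat p Sig * θ2).trace

def Pnorm {d p : ℕ} (Sig : Matrix (Fin d) (Fin d) ℝ)
    (θ : Matrix (Fin p ⊕ Fin d) (Fin d) ℝ) : ℝ :=
  Real.sqrt (Pinner Sig θ θ)

attribute [local instance] Matrix.normedAddCommGroup Matrix.normedSpace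

/-- Gradient (w.r.t. the Frobenius inner product) of a scalar function of a matrix. -/
def matGrad {ι κ : Type*} [Fintype ι] [Fintype κ] [DecidableEq ι] [DecidableEq κ]
    (f : Matrix ι κ ℝ → ℝ) (θ : Matrix ι κ ℝ) : Matrix ι κ ℝ :=
  Matrix.of fun i j => fderiv ℝ f θ (Matrix.single i j 1)

/-- Regularized population loss as a function of the concatenated parameter. -/
def Qfun {d p : ℕ} (Sig : Matrix (Fin d) (Fin d) ℝ) (Om : Matrix (Fin p) (Fin p) ℝ)
    (M : Matrix (Fin p) (Fin d) ℝ) (θ : Matrix (Fin p ⊕ Fin d) (Fin d) ℝ) : ℝ :=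
  popLoss Sig Om M (topM θ) (botM θ) + reg Sig (topM θ) (botM θ)

def gradQ {d p : ℕ} (Sig : Matrix (Fin d) (Fin d) ℝ) (Om : Matrix (Fin p) (Fin p) ℝ)
    (M : Matrix (Fin p) (Fin d) ℝ) (θ : Matrix (Fin p ⊕ Fin d) (Fin d) ℝ) :
    Matrix (Fin p ⊕ Fin d) (Fin d) ℝ :=
  matGrad (Qfun Sig Om M) θ

/-- The manifold `S` of global minimizers. -/
def Sman {d p : ℕ} (Sig : Matrix (Fin d) (Fin d) ℝ) (U : Matrix (Fin p) (Fin d) ℝ)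
    (Γ V : Matrix (Fin d) (Fin d) ℝ) : Set (Matrix (Fin p ⊕ Fin d) (Fin d) ℝ) :=
  {θ | ∃ J : Matrix (Fin d) (Fin d) ℝ, Jᵀ * J = 1 ∧
    θ = vcat (U * msqrt Γ * Jᵀ * (msqrt Sig)⁻¹)
             ((msqrt Sig)⁻¹ * V * msqrt Γ * Jᵀ * (msqrt Sig)⁻¹)}

def K0 {d p : ℕ} (Sig : Matrix (Fin d) (Fin d) ℝ) (M : Matrix (Fin p) (Fin d) ℝ) : ℝ :=
  2 * svalMin (M * msqrt Sig) * svalMin Sig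

def K1 {d p : ℕ} (Sig : Matrix (Fin d) (Fin d) ℝ) (M : Matrix (Fin p) (Fin d) ℝ) : ℝ :=
  2 * svalMax (M * msqrt Sig) * svalMax Sig

def betaC {d p : ℕ} (Sig : Matrix (Fin d) (Fin d) ℝ) (M : Matrix (Fin p) (Fin d) ℝ) : ℝ :=
  (14 + 7 * (svalMax Sig / svalMin Sig) ^ 2) * K1 Sig M ^ 2
    + 21 * opN Sig ^ 2 * K1 Sig M + 7 * opN Sig ^ 4

def eps0 {d p : ℕ} (Sig : Matrix (Fin d) (Fin d) ℝ) (M : Matrix (Fin p) (Fin d) ℝ) : ℝ :=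
  min 1 (min (Real.sqrt (K0 Sig M / (3 * K1 Sig M * opN Sig)))
    (Real.sqrt (Real.sqrt (K0 Sig M / 2)) / Real.sqrt (opN Sig)))

def eps1 {d p : ℕ} (Sig : Matrix (Fin d) (Fin d) ℝ) (M : Matrix (Fin p) (Fin d) ℝ) : ℝ :=
  (1 / (2 * Real.sqrt (opN Sig))) * (1/16 - Real.sqrt (svalMax (M * msqrt Sig)))

/-- Softmax self-attention weights. -/
def softmaxW {d n : ℕ} (B : Matrix (Fin d) (Fin d) ℝ) (X : Fin n → Fin d → ℝ)
    (i j : Fin n) : ℝ :=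
  Real.exp (X i ⬝ᵥ B.mulVec (X j)) / ∑ k, Real.exp (X i ⬝ᵥ B.mulVec (X k))

/-- Softmax-weighted mean `μ_i`. -/
def wmean {d n : ℕ} (B : Matrix (Fin d) (Fin d) ℝ) (X : Fin n → Fin d → ℝ)
    (i : Fin n) : Fin d → ℝ :=
  ∑ j, softmaxW B X i j • X j


/-- Empirical covariance of a sample. -/
def empCov {d n : ℕ} (X : Fin n → Fin d → ℝ) : Matrix (Fin d) (Fin d) ℝ :=
  (n:ℝ)⁻¹ • ∑ i, Matrix.vecMulVec (X i) (X i)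


open MeasureTheory Matrix Real ProbabilityTheory
open scoped BigOperators NNReal ENNReal



namespace SCMaux

lemma gauss_pdf_shift (t : ℝ) :
    (fun x : ℝ => gaussianPDFReal 0 1 x * rexp (t * x))
      = fun x => rexp (t^2/2) * gaussianPDFReal t 1 x := by
  funext x
  simp only [gaussianPDFReal, NNReal.coe_one, mul_one, sub_zero]
  rw [mul_assoc, ← Real.exp_add, mul_comm (rexp (t^2/2)), mul_assoc, ← Real.exp_add]
  congr 1
  ring_nf

lemma integrable_exp_std (t : ℝ) :
    Integrable (fun x => rexp (t * x)) (gaussianReal 0 1) := by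
  rw [gaussianReal_of_var_ne_zero 0 one_ne_zero]
  have hmeas : Measurable fun x => (gaussianPDFReal 0 1 x).toNNReal :=
    (measurable_gaussianPDFReal 0 1).real_toNNReal
  rw [show gaussianPDF 0 1 = fun x => ((gaussianPDFReal 0 1 x).toNNReal : ℝ≥0∞) from rfl]
  rw [integrable_withDensity_iff_integrable_smul hmeas]
  have heq : (fun x => ((gaussianPDFReal 0 1 x).toNNReal : ℝ≥0) • rexp (t * x))
      = fun x => rexp (t^2/2) * gaussianPDFReal t 1 x := by
    funext x
    rw [NNReal.smul_def, Real.coe_toNNReal _ (gaussianPDFReal_nonneg _ _ _)]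
    exact congrFun (gauss_pdf_shift t) x
  rw [heq]
  exact (integrable_gaussianPDFReal t 1).const_mul _

lemma integral_exp_std (t : ℝ) :
    ∫ x, rexp (t * x) ∂gaussianReal 0 1 = rexp (t^2/2) := by
  rw [gaussianReal_of_var_ne_zero 0 one_ne_zero]
  have hmeas : Measurable fun x => (gaussianPDFReal 0 1 x).toNNReal :=
    (measurable_gaussianPDFReal 0 1).real_toNNReal
  rw [show gaussianPDF 0 1 = fun x => ((gaussianPDFReal 0 1 x).toNNReal : ℝ≥0∞) from rfl]
  rw [integral_withDensity_eq_integral_smul hmeas]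
  have heq : (fun x => ((gaussianPDFReal 0 1 x).toNNReal : ℝ≥0) • rexp (t * x))
      = fun x => rexp (t^2/2) * gaussianPDFReal t 1 x := by
    funext x
    rw [NNReal.smul_def, Real.coe_toNNReal _ (gaussianPDFReal_nonneg _ _ _)]
    exact congrFun (gauss_pdf_shift t) x
  rw [heq, MeasureTheory.integral_const_mul, integral_gaussianPDFReal_eq_one t one_ne_zero, mul_one]

lemma integral_pi_prod {ι E : Type*} [Fintype ι] [MeasurableSpace E] (μ : Measure E)
    [IsProbabilityMeasure μ] (f : ι → E → ℝ) :
    ∫ x : ι → E, ∏ i, f i (x i) ∂(Measure.pi fun _ => μ) = ∏ i, ∫ x, f i x ∂μ := by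
  letI : MeasureSpace E := ⟨μ⟩
  haveI : SigmaFinite (volume : Measure E) := inferInstanceAs (SigmaFinite μ)
  exact MeasureTheory.integral_fintype_prod_eq_prod (μ := fun _ => μ) f

lemma integrable_pi_prod {ι E : Type*} [Fintype ι] [MeasurableSpace E] (μ : Measure E)
    [IsProbabilityMeasure μ] {f : ι → E → ℝ} (hf : ∀ i, Integrable (f i) μ) :
    Integrable (fun x : ι → E => ∏ i, f i (x i)) (Measure.pi fun _ => μ) := by
  letI : MeasureSpace E := ⟨μ⟩
  haveI : SigmaFinite (volume : Measure E) := inferInstanceAs (SigmaFinite μ)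
  exact MeasureTheory.Integrable.fintype_prod hf

lemma measurable_mulVec {d : ℕ} (M : Matrix (Fin d) (Fin d) ℝ) :
    Measurable (M.mulVec) := by
  apply measurable_pi_lambda
  intro i
  simp only [Matrix.mulVec, dotProduct]
  exact Finset.measurable_sum _ fun j _ => (measurable_pi_apply j).const_mul _

end SCMaux
namespace SCMaux

variable {d : ℕ} {Sig : Matrix (Fin d) (Fin d) ℝ}

lemma msqrt_eq (hP : Sig.PosSemidef) : msqrt Sig =
    (hP.1.eigenvectorUnitary : Matrix (Fin d) (Fin d) ℝ) *
      diagonal (fun i => Real.sqrt (hP.1.eigenvalues i)) *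
      (star hP.1.eigenvectorUnitary : Matrix (Fin d) (Fin d) ℝ) := by
  unfold msqrt
  exact dif_pos hP

lemma msqrt_sym (hP : Sig.PosSemidef) : (msqrt Sig)ᵀ = msqrt Sig := by
  rw [msqrt_eq hP, ← Matrix.conjTranspose_eq_transpose_of_trivial]
  simp only [← Matrix.star_eq_conjTranspose, star_mul, star_star, mul_assoc]
  rw [Matrix.star_eq_conjTranspose (diagonal _), Matrix.diagonal_conjTranspose, star_trivial]

lemma msqrt_mul_self (hP : Sig.PosSemidef) : msqrt Sig * msqrt Sig = Sig := by
  rw [msqrt_eq hP]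
  have hU : (star hP.1.eigenvectorUnitary : Matrix (Fin d) (Fin d) ℝ) *
      (hP.1.eigenvectorUnitary : Matrix (Fin d) (Fin d) ℝ) = 1 :=
    Unitary.coe_star_mul_self _
  have hD : diagonal (fun i => Real.sqrt (hP.1.eigenvalues i)) *
      diagonal (fun i => Real.sqrt (hP.1.eigenvalues i))
      = diagonal (RCLike.ofReal ∘ hP.1.eigenvalues) := by
    rw [diagonal_mul_diagonal]
    congr 1
    funext i
    simp [Real.mul_self_sqrt (hP.eigenvalues_nonneg i)]
  conv_rhs => rw [hP.1.spectral_theorem, Unitary.conjStarAlgAut_apply]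
  calc _ = (hP.1.eigenvectorUnitary : Matrix (Fin d) (Fin d) ℝ) *
        (diagonal (fun i => Real.sqrt (hP.1.eigenvalues i)) *
          ((star hP.1.eigenvectorUnitary : Matrix (Fin d) (Fin d) ℝ) *
            (hP.1.eigenvectorUnitary : Matrix (Fin d) (Fin d) ℝ)) *
          diagonal (fun i => Real.sqrt (hP.1.eigenvalues i))) *
        (star hP.1.eigenvectorUnitary : Matrix (Fin d) (Fin d) ℝ) := by
        simp only [mul_assoc]
    _ = _ := by rw [hU, mul_one, hD]

instance gaussian_isProb : IsProbabilityMeasure (gaussian Sig) := by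
  unfold gaussian
  exact Measure.isProbabilityMeasure_map (measurable_mulVec _).aemeasurable

lemma exp_dot_prod (v : Fin d → ℝ) (t : ℝ) (M : Matrix (Fin d) (Fin d) ℝ) :
    (fun u : Fin d → ℝ => rexp (t * (v ⬝ᵥ M.mulVec u)))
      = fun u => ∏ j, rexp (t * (Matrix.vecMul v M) j * u j) := by
  funext u
  rw [Matrix.dotProduct_mulVec]
  simp only [dotProduct, Finset.mul_sum, Real.exp_sum, mul_assoc]

lemma integrable_exp_dot (hP : Sig.PosSemidef) (v : Fin d → ℝ) (t : ℝ) :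
    Integrable (fun z => rexp (t * (v ⬝ᵥ z))) (gaussian Sig) := by
  have hcont : Continuous fun z : Fin d → ℝ => rexp (t * (v ⬝ᵥ z)) := by
    apply Real.continuous_exp.comp
    exact continuous_const.mul (continuous_finset_sum _ fun j _ =>
      (continuous_const.mul (continuous_apply j)))
  unfold gaussian
  rw [integrable_map_measure hcont.aestronglyMeasurable (measurable_mulVec _).aemeasurable]
  have : ((fun z => rexp (t * (v ⬝ᵥ z))) ∘ (msqrt Sig).mulVec)
      = fun u => ∏ j, rexp (t * (Matrix.vecMul v (msqrt Sig)) j * u j) := by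
    rw [← exp_dot_prod]; rfl
  rw [this]
  exact integrable_pi_prod _ fun j => integrable_exp_std _

lemma sum_sq_vecMul (hP : Sig.PosSemidef) (v : Fin d → ℝ) :
    ∑ j, (Matrix.vecMul v (msqrt Sig)) j ^ 2 = v ⬝ᵥ Sig.mulVec v := by
  have h1 : ∑ j, (Matrix.vecMul v (msqrt Sig)) j ^ 2
      = Matrix.vecMul v (msqrt Sig) ⬝ᵥ Matrix.vecMul v (msqrt Sig) := by
    simp [dotProduct, sq]
  rw [h1]
  conv_lhs => rw [show Matrix.vecMul v (msqrt Sig) ⬝ᵥ Matrix.vecMul v (msqrt Sig)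
    = Matrix.vecMul v (msqrt Sig) ⬝ᵥ (msqrt Sig)ᵀ.mulVec v from by
      rw [Matrix.mulVec_transpose]]
  rw [← Matrix.dotProduct_mulVec, Matrix.mulVec_mulVec, msqrt_sym hP, msqrt_mul_self hP]

lemma integral_exp_dot (hP : Sig.PosSemidef) (v : Fin d → ℝ) (t : ℝ) :
    ∫ z, rexp (t * (v ⬝ᵥ z)) ∂gaussian Sig
      = rexp (t ^ 2 * (v ⬝ᵥ Sig.mulVec v) / 2) := by
  have hcont : Continuous fun z : Fin d → ℝ => rexp (t * (v ⬝ᵥ z)) := by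
    apply Real.continuous_exp.comp
    exact continuous_const.mul (continuous_finset_sum _ fun j _ =>
      (continuous_const.mul (continuous_apply j)))
  unfold gaussian
  rw [MeasureTheory.integral_map (measurable_mulVec _).aemeasurable hcont.aestronglyMeasurable]
  rw [show (fun u => rexp (t * (v ⬝ᵥ (msqrt Sig).mulVec u)))
      = fun u => ∏ j, rexp (t * (Matrix.vecMul v (msqrt Sig)) j * u j) from exp_dot_prod v t _]
  rw [integral_pi_prod (gaussianReal 0 1) (fun j x => rexp (t * (Matrix.vecMul v (msqrt Sig)) j * x))]
  have : ∀ j, ∫ x, rexp (t * (Matrix.vecMul v (msqrt Sig)) j * x) ∂gaussianReal 0 1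
      = rexp ((t * (Matrix.vecMul v (msqrt Sig)) j) ^ 2 / 2) := fun j => integral_exp_std _
  rw [Finset.prod_congr rfl fun j _ => this j, ← Real.exp_sum]
  congr 1
  calc ∑ j, (t * (Matrix.vecMul v (msqrt Sig)) j) ^ 2 / 2
      = ∑ j, t ^ 2 / 2 * (Matrix.vecMul v (msqrt Sig)) j ^ 2 :=
        Finset.sum_congr rfl fun j _ => by ring
    _ = t ^ 2 / 2 * ∑ j, (Matrix.vecMul v (msqrt Sig)) j ^ 2 := by rw [Finset.mul_sum]
    _ = t ^ 2 * (v ⬝ᵥ Sig.mulVec v) / 2 := by rw [sum_sq_vecMul hP]; ring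

end SCMaux

set_option maxHeartbeats 1000000 in
/-- Conditional moments of the softmax weights. -/
theorem softmax_conditional_moments
    {d : ℕ} (Sig : Matrix (Fin d) (Fin d) ℝ) (hSig : Sig.PosDef)
    (B : Matrix (Fin d) (Fin d) ℝ) (m : ℕ) (hm : 1 ≤ m)
    (q : ℝ) (hq : 1 ≤ q) (x1 : Fin d → ℝ) :
    (∫ y : Fin m → Fin d → ℝ,
        softmaxW B (Fin.cons x1 y) 0 1 ^ q ∂Measure.pi fun _ => gaussian Sig)
      ≤ ((m:ℝ) ^ q)⁻¹ * Real.exp ((q ^ 2 / 2) * (x1 ⬝ᵥ (B * Sig * Bᵀ).mulVec x1))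
    ∧ (∫ y : Fin m → Fin d → ℝ,
        softmaxW B (Fin.cons x1 y) 0 0 ^ q ∂Measure.pi fun _ => gaussian Sig)
      ≤ ((m:ℝ) ^ q)⁻¹ * Real.exp (q * (x1 ⬝ᵥ B.mulVec x1))
          * Real.exp ((q ^ 2 / (2 * m)) * (x1 ⬝ᵥ (B * Sig * Bᵀ).mulVec x1)) := by
  classical
  rcases m with _ | m
  · exact absurd hm (by norm_num)
  clear hm
  have hP : Sig.PosSemidef := hSig.posSemidef
  have hq0 : (0:ℝ) < q := lt_of_lt_of_le one_pos hq
  set n : ℝ := (m : ℝ) + 1 with hn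
  have hn0 : (0:ℝ) < n := by positivity
  have hcast : ((m + 1 : ℕ) : ℝ) = n := by push_cast; ring
  set v : Fin d → ℝ := Matrix.vecMul x1 B with hv
  set σ2 : ℝ := v ⬝ᵥ Sig.mulVec v with hσ2def
  have hσ2 : x1 ⬝ᵥ (B * Sig * Bᵀ).mulVec x1 = σ2 := by
    rw [← Matrix.mulVec_mulVec, ← Matrix.mulVec_mulVec, Matrix.dotProduct_mulVec,
      Matrix.mulVec_transpose, hσ2def, hv]
  have hσ2nn : 0 ≤ σ2 := by
    have h := hP.dotProduct_mulVec_nonneg v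
    simpa [hσ2def] using h
  -- product integral facts
  have hIntProd : ∀ c : Fin (m+1) → ℝ, Integrable (fun y : Fin (m+1) → Fin d → ℝ =>
      ∏ k, rexp (c k * (v ⬝ᵥ y k))) (Measure.pi fun _ => gaussian Sig) :=
    fun c => SCMaux.integrable_pi_prod _ fun k => SCMaux.integrable_exp_dot hP v (c k)
  have hIntEq : ∀ c : Fin (m+1) → ℝ, (∫ y : Fin (m+1) → Fin d → ℝ,
      ∏ k, rexp (c k * (v ⬝ᵥ y k)) ∂(Measure.pi fun _ => gaussian Sig))
      = rexp ((∑ k, (c k)^2) * σ2 / 2) := by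
    intro c
    rw [SCMaux.integral_pi_prod (gaussian Sig) (fun k z => rexp (c k * (v ⬝ᵥ z)))]
    rw [Finset.prod_congr rfl fun k _ => SCMaux.integral_exp_dot hP v (c k), ← Real.exp_sum]
    congr 1
    rw [← Finset.sum_div, ← Finset.sum_mul]
  -- denominator lower bound
  have hden : ∀ y : Fin (m+1) → Fin d → ℝ,
      n * rexp ((∑ k, v ⬝ᵥ y k) / n)
        ≤ ∑ k : Fin (m+2), rexp (x1 ⬝ᵥ B.mulVec ((Fin.cons x1 y : Fin (m+2) → Fin d → ℝ) k)) := by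
    intro y
    have hS : n * rexp ((∑ k, v ⬝ᵥ y k) / n) ≤ ∑ k : Fin (m+1), rexp (v ⬝ᵥ y k) := by
      have h := Real.geom_mean_le_arith_mean_weighted Finset.univ
        (fun _ : Fin (m+1) => n⁻¹) (fun k => rexp (v ⬝ᵥ y k))
        (fun _ _ => by positivity)
        (by rw [Finset.sum_const, Finset.card_univ, Fintype.card_fin, nsmul_eq_mul, hcast,
          mul_inv_cancel₀ hn0.ne'])
        (fun _ _ => (Real.exp_pos _).le)
      have hL : ∏ k : Fin (m+1), rexp (v ⬝ᵥ y k) ^ (n⁻¹)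
          = rexp ((∑ k, v ⬝ᵥ y k) / n) := by
        calc ∏ k : Fin (m+1), rexp (v ⬝ᵥ y k) ^ (n⁻¹)
            = ∏ k : Fin (m+1), rexp ((v ⬝ᵥ y k) * n⁻¹) :=
              Finset.prod_congr rfl fun k _ => (Real.exp_mul _ _).symm
          _ = rexp (∑ k : Fin (m+1), (v ⬝ᵥ y k) * n⁻¹) := (Real.exp_sum _ _).symm
          _ = rexp ((∑ k, v ⬝ᵥ y k) / n) := by rw [← Finset.sum_mul, div_eq_mul_inv]
      rw [hL, ← Finset.mul_sum] at h
      have h2 := mul_le_mul_of_nonneg_left h hn0.le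
      rwa [← mul_assoc, mul_inv_cancel₀ hn0.ne', one_mul] at h2
    have hSD : (∑ k : Fin (m+1), rexp (v ⬝ᵥ y k))
        ≤ ∑ k : Fin (m+2), rexp (x1 ⬝ᵥ B.mulVec ((Fin.cons x1 y : Fin (m+2) → Fin d → ℝ) k)) := by
      conv_rhs => rw [Fin.sum_univ_succ]
      simp only [Fin.cons_zero, Fin.cons_succ]
      have hsum : ∑ k : Fin (m+1), rexp (x1 ⬝ᵥ B.mulVec (y k))
          = ∑ k : Fin (m+1), rexp (v ⬝ᵥ y k) :=
        Finset.sum_congr rfl fun k _ => by rw [Matrix.dotProduct_mulVec, ← hv]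
      rw [hsum]
      nlinarith [Real.exp_pos (x1 ⬝ᵥ B.mulVec x1)]
    exact le_trans hS hSD
  have hDpos : ∀ y : Fin (m+1) → Fin d → ℝ,
      0 < ∑ k : Fin (m+2), rexp (x1 ⬝ᵥ B.mulVec ((Fin.cons x1 y : Fin (m+2) → Fin d → ℝ) k)) :=
    fun y => Finset.sum_pos (fun k _ => Real.exp_pos _) Finset.univ_nonempty
  have hfrac : ∀ W T : ℝ, rexp W / (n * rexp (T / n)) = n⁻¹ * rexp (W - T / n) := by
    intro W T
    rw [Real.exp_sub]
    field_simp
  have hpow : ∀ W : ℝ, (n⁻¹ * rexp W) ^ q = ((n ^ q)⁻¹) * rexp (W * q) := by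
    intro W
    rw [Real.mul_rpow (inv_nonneg.2 hn0.le) (Real.exp_pos _).le,
      Real.inv_rpow hn0.le, ← Real.exp_mul]
  -- generic integral bound
  have hmain : ∀ (c : Fin (m+1) → ℝ) (num : ℝ) (i : Fin (m+2)),
      (∀ y : Fin (m+1) → Fin d → ℝ, softmaxW B (Fin.cons x1 y) 0 i ^ q
        ≤ (n ^ q)⁻¹ * (rexp num * ∏ k, rexp (c k * (v ⬝ᵥ y k)))) →
      (∫ y : Fin (m+1) → Fin d → ℝ,
          softmaxW B (Fin.cons x1 y) 0 i ^ q ∂Measure.pi fun _ => gaussian Sig)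
        ≤ (n ^ q)⁻¹ * (rexp num * rexp ((∑ k, (c k)^2) * σ2 / 2)) := by
    intro c num i hpt
    have hint : Integrable (fun y : Fin (m+1) → Fin d → ℝ =>
        (n ^ q)⁻¹ * (rexp num * ∏ k, rexp (c k * (v ⬝ᵥ y k))))
        (Measure.pi fun _ => gaussian Sig) := ((hIntProd c).const_mul _).const_mul _
    have h1 := integral_mono_of_nonneg
      (Filter.Eventually.of_forall (fun y => Real.rpow_nonneg
        (div_nonneg (Real.exp_pos _).le (Finset.sum_nonneg fun k _ => (Real.exp_pos _).le)) q))
      hint (Filter.Eventually.of_forall hpt)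
    calc (∫ y : Fin (m+1) → Fin d → ℝ,
          softmaxW B (Fin.cons x1 y) 0 i ^ q ∂Measure.pi fun _ => gaussian Sig)
        ≤ ∫ y : Fin (m+1) → Fin d → ℝ,
            (n ^ q)⁻¹ * (rexp num * ∏ k, rexp (c k * (v ⬝ᵥ y k)))
            ∂Measure.pi fun _ => gaussian Sig := h1
      _ = (n ^ q)⁻¹ * (rexp num * rexp ((∑ k, (c k)^2) * σ2 / 2)) := by
          rw [MeasureTheory.integral_const_mul, MeasureTheory.integral_const_mul, hIntEq c]
  constructor
  · -- p12 bound
    set c1 : Fin (m+1) → ℝ := fun k => (if k = 0 then q else 0) - q / n with hc1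
    have hpt : ∀ y : Fin (m+1) → Fin d → ℝ, softmaxW B (Fin.cons x1 y) 0 1 ^ q
        ≤ (n ^ q)⁻¹ * (rexp 0 * ∏ k, rexp (c1 k * (v ⬝ᵥ y k))) := by
      intro y
      have hsm : softmaxW B (Fin.cons x1 y) 0 1
          = rexp (v ⬝ᵥ y 0) / ∑ k : Fin (m+2), rexp (x1 ⬝ᵥ B.mulVec ((Fin.cons x1 y : Fin (m+2) → Fin d → ℝ) k)) := by
        simp only [softmaxW, Fin.cons_zero]
        congr 2
        rw [show (1 : Fin (m+2)) = (0 : Fin (m+1)).succ from (Fin.succ_zero_eq_one).symm,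
          Fin.cons_succ, Matrix.dotProduct_mulVec, ← hv]
      have hb : softmaxW B (Fin.cons x1 y) 0 1
          ≤ n⁻¹ * rexp ((v ⬝ᵥ y 0) - (∑ k, v ⬝ᵥ y k) / n) := by
        rw [hsm, ← hfrac]
        exact (div_le_div_iff_of_pos_left (Real.exp_pos _) (hDpos y) (by positivity)).mpr (hden y)
      have h2 : softmaxW B (Fin.cons x1 y) 0 1 ^ q
          ≤ (n⁻¹ * rexp ((v ⬝ᵥ y 0) - (∑ k, v ⬝ᵥ y k) / n)) ^ q := by
        apply Real.rpow_le_rpow _ hb hq0.le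
        rw [hsm]
        exact div_nonneg (Real.exp_pos _).le (hDpos y).le
      refine h2.trans_eq ?_
      rw [hpow, ← Real.exp_sum, ← Real.exp_add]
      congr 1
      have hsum : ∑ k, c1 k * (v ⬝ᵥ y k)
          = q * (v ⬝ᵥ y 0) - q / n * ∑ k, v ⬝ᵥ y k := by
        simp only [hc1, sub_mul, Finset.sum_sub_distrib, ite_mul, zero_mul,
          Finset.sum_ite_eq', Finset.mem_univ, if_true, Finset.mul_sum]
      rw [hsum]
      ring
    have h := hmain c1 0 1 hpt
    have hc1sq : ∑ k : Fin (m+1), (c1 k)^2 ≤ q^2 := by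
      rw [Fin.sum_univ_succ]
      have hz : c1 0 = q - q / n := by simp [hc1]
      have hs : ∀ k : Fin m, (c1 k.succ) ^ 2 = (q / n) ^ 2 := fun k => by
        simp [hc1, Fin.succ_ne_zero, neg_sq]
      rw [hz, Finset.sum_congr rfl fun k _ => hs k, Finset.sum_const, Finset.card_univ,
        Fintype.card_fin, nsmul_eq_mul]
      have h1 : n * (q / n) = q := mul_div_cancel₀ q hn0.ne'
      have key : ∀ u : ℝ, n * u = q → q * u = n * u^2 := fun u hu => by rw [← hu]; ring
      have h3 : q * (q / n) = n * (q / n)^2 := key _ h1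
      have h4 : n * (q / n)^2 = (m:ℝ) * (q / n)^2 + (q / n)^2 := by rw [hn]; ring
      nlinarith [h3, h4, mul_nonneg hq0.le (by positivity : (0:ℝ) ≤ q / n)]
    have hexp : rexp ((∑ k, (c1 k)^2) * σ2 / 2) ≤ rexp (q^2 / 2 * σ2) := by
      apply Real.exp_le_exp.2
      calc (∑ k, (c1 k)^2) * σ2 / 2 ≤ q^2 * σ2 / 2 := by gcongr
        _ = q^2 / 2 * σ2 := by ring
    rw [hσ2, hcast]
    calc (∫ y : Fin (m+1) → Fin d → ℝ,
          softmaxW B (Fin.cons x1 y) 0 1 ^ q ∂Measure.pi fun _ => gaussian Sig)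
        ≤ (n ^ q)⁻¹ * (rexp 0 * rexp ((∑ k, (c1 k)^2) * σ2 / 2)) := h
      _ ≤ (n ^ q)⁻¹ * rexp (q^2 / 2 * σ2) := by
          rw [Real.exp_zero, one_mul]
          exact mul_le_mul_of_nonneg_left hexp (by positivity)
  · -- p11 bound
    set c2 : Fin (m+1) → ℝ := fun _ => -(q / n) with hc2
    have hpt : ∀ y : Fin (m+1) → Fin d → ℝ, softmaxW B (Fin.cons x1 y) 0 0 ^ q
        ≤ (n ^ q)⁻¹ * (rexp (q * (x1 ⬝ᵥ B.mulVec x1)) * ∏ k, rexp (c2 k * (v ⬝ᵥ y k))) := by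
      intro y
      have hsm : softmaxW B (Fin.cons x1 y) 0 0
          = rexp (x1 ⬝ᵥ B.mulVec x1) / ∑ k : Fin (m+2), rexp (x1 ⬝ᵥ B.mulVec ((Fin.cons x1 y : Fin (m+2) → Fin d → ℝ) k)) := by
        simp only [softmaxW, Fin.cons_zero]
      have hb : softmaxW B (Fin.cons x1 y) 0 0
          ≤ n⁻¹ * rexp ((x1 ⬝ᵥ B.mulVec x1) - (∑ k, v ⬝ᵥ y k) / n) := by
        rw [hsm, ← hfrac]
        exact (div_le_div_iff_of_pos_left (Real.exp_pos _) (hDpos y) (by positivity)).mpr (hden y)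
      have h2 : softmaxW B (Fin.cons x1 y) 0 0 ^ q
          ≤ (n⁻¹ * rexp ((x1 ⬝ᵥ B.mulVec x1) - (∑ k, v ⬝ᵥ y k) / n)) ^ q := by
        apply Real.rpow_le_rpow _ hb hq0.le
        rw [hsm]
        exact div_nonneg (Real.exp_pos _).le (hDpos y).le
      refine h2.trans_eq ?_
      rw [hpow, ← Real.exp_sum, ← Real.exp_add]
      congr 1
      have hsum : ∑ k, c2 k * (v ⬝ᵥ y k) = -(q / n) * ∑ k, v ⬝ᵥ y k := by
        simp only [hc2, ← Finset.mul_sum]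
      rw [hsum]
      ring
    have h := hmain c2 (q * (x1 ⬝ᵥ B.mulVec x1)) 0 hpt
    have hc2sq : (∑ k : Fin (m+1), (c2 k)^2) * σ2 / 2 = q^2 / (2 * n) * σ2 := by
      simp only [hc2, neg_sq, Finset.sum_const, Finset.card_univ, Fintype.card_fin,
        nsmul_eq_mul]
      rw [hcast]
      field_simp
    rw [hσ2, hcast]
    calc (∫ y : Fin (m+1) → Fin d → ℝ,
          softmaxW B (Fin.cons x1 y) 0 0 ^ q ∂Measure.pi fun _ => gaussian Sig)
        ≤ (n ^ q)⁻¹ * (rexp (q * (x1 ⬝ᵥ B.mulVec x1))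
            * rexp ((∑ k, (c2 k)^2) * σ2 / 2)) := h
      _ = (n ^ q)⁻¹ * rexp (q * (x1 ⬝ᵥ B.mulVec x1)) * rexp (q^2 / (2 * n) * σ2) := by
          rw [hc2sq]; ring

end
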